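/- Let v : 2^N → ℝ≥0 be a monotone gross-substitutes valuation, let A, B ⊆ N be disjoint, let j ∉ A ∪ B, and let x ≥ 0. Suppose v(A∪{j}∪{i}) - v(A∪{j}) = 0 for all i ∈ B, and 0 ≤ v(A∪{j}) - v(A) - x < v(A∪B) - v(A). Then there exists i ∈ B such that v(A∪{j}) - v(A) - x < v(A∪{i}) - v(A). -/

import Mathlib

/-!
Gross substitutes implies submodularity: if the marginal of `i` grew when `k` is added to `S`,
one could price `i` between its two marginals and `k` so that `S` and `S + i + k` are both
demanded; raising the price of `k` would then leave no demanded set containing `S + i`. Hence the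
zero marginals of the elements of `B` over `A + j` add up: `v(A + j + C) = v(A + j)` for `C ⊆ B`.

Take `C ⊆ B` minimal with `v(C | A) > v(j | A) - x`. If `C` had two elements, spreading the
surplus of `A ∪ C` uniformly over `C` as prices, and pricing `j` just above `x`, makes `A ∪ C`
demanded. Raising the price of one element of `C` must keep the others demanded, but by
minimality and submodularity any such set is strictly worse than `A + j`. So `C` is a singleton.
-/

open Finset Function

namespace GrossSubstitutes

variable {ι : Type*} [DecidableEq ι]

def utility (v : Finset ι → ℝ) (p : ι → ℝ) (S : Finset ι) : ℝ := v S - ∑ i ∈ S, p i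

def IsDemanded (v : Finset ι → ℝ) (p : ι → ℝ) (S : Finset ι) : Prop :=
  ∀ T, utility v p T ≤ utility v p S

end GrossSubstitutes

open GrossSubstitutes

def GrossSubstitutes {ι : Type*} [DecidableEq ι] (v : Finset ι → ℝ) : Prop :=
  ∀ p p' : ι → ℝ, p ≤ p' → ∀ S, IsDemanded v p S →
    ∃ T, IsDemanded v p' T ∧ ∀ k ∈ S, p k = p' k → k ∈ T

namespace GrossSubstitutes

variable {ι : Type*} [DecidableEq ι] {v : Finset ι → ℝ}

lemma utility_update_add (p : ι → ℝ) (k : ι) (e : ℝ) (U : Finset ι) :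
    utility v (update p k (p k + e)) U = utility v p U - if k ∈ U then e else 0 := by
  have : ∀ i, update p k (p k + e) i = p i + if i = k then e else 0 := by
    intro i; by_cases h : i = k <;> simp [h]
  simp only [utility, this, sum_add_distrib, sum_ite_eq']
  ring

lemma exists_isDemanded_erase_subset (hgs : GrossSubstitutes v) {p : ι → ℝ} {S : Finset ι}
    (hS : IsDemanded v p S) (k : ι) {e : ℝ} (he : 0 ≤ e) :
    ∃ T, IsDemanded v (update p k (p k + e)) T ∧ S.erase k ⊆ T := by
  have hle : p ≤ update p k (p k + e) := by
    intro i; by_cases h : i = k <;> simp [h, he]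
  obtain ⟨T, hT, hST⟩ := hgs p _ hle S hS
  exact ⟨T, hT, fun i hi => hST i (mem_of_mem_erase hi) (by simp [ne_of_mem_erase hi])⟩

def extendPrices (F : Finset ι) (p : ι → ℝ) (M : ℝ) (i : ι) : ℝ := if i ∈ F then p i else M

lemma utility_extendPrices_of_subset {F U : Finset ι} (p : ι → ℝ) (M : ℝ) (hU : U ⊆ F) :
    utility v (extendPrices F p M) U = utility v p U := by
  unfold utility extendPrices
  rw [sum_congr rfl fun i hi => if_pos (hU hi)]

lemma utility_single_add_single_le (hv : Monotone v) {S U : Finset ι} {i k : ι} (hiS : i ∉ S)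
    (hkS : k ∉ S) (hik : i ≠ k) {q t : ℝ} (hi : v (insert i S) - q ≤ v S)
    (hk : v (insert k S) - t ≤ v S) (hF : v (insert i (insert k S)) - q - t ≤ v S)
    (hU : U ⊆ insert i (insert k S)) :
    utility v (Pi.single i q + Pi.single k t) U ≤ v S := by
  have hle (X : Finset ι) (hUX : U ⊆ X) (hiX : i ∈ U ↔ i ∈ X) (hkX : k ∈ U ↔ k ∈ X)
      (hX : v X - (if i ∈ X then q else 0) - (if k ∈ X then t else 0) ≤ v S) :
      utility v (Pi.single i q + Pi.single k t) U ≤ v S := by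
    simp only [utility, Pi.add_apply, sum_add_distrib, sum_pi_single', hiX, hkX]
    linarith [hv hUX]
  by_cases hiU : i ∈ U <;> by_cases hkU : k ∈ U
  · exact hle _ hU (by simp [hiU]) (by simp [hkU]) (by simpa [hkS] using hF)
  · exact hle (insert i S) (fun y hy => by have := hU hy; aesop) (by simp [hiU])
      (by simp [hkU, hik.symm, hkS]) (by simpa [hkS, hik.symm] using hi)
  · exact hle (insert k S) (fun y hy => by have := hU hy; aesop) (by simp [hiU, hik, hiS])
      (by simp [hkU]) (by simpa [hiS, hik] using hk)
  · exact hle S (fun y hy => by have := hU hy; aesop) (by simp [hiU, hiS])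
      (by simp [hkU, hkS]) (by simp [hiS, hkS])

variable [Fintype ι]

lemma utility_extendPrices_le_of_not_subset (hv : Monotone v) {F U : Finset ι} {p : ι → ℝ}
    {M : ℝ} (hp : ∀ i ∈ F, 0 ≤ p i) (hM : 0 ≤ M) (hU : ¬ U ⊆ F) :
    utility v (extendPrices F p M) U ≤ v univ - M := by
  obtain ⟨i, hiU, hiF⟩ := not_subset.mp hU
  have hnonneg : ∀ k ∈ U, 0 ≤ extendPrices F p M k := by
    intro k _; unfold extendPrices; split_ifs with h
    exacts [hp k h, hM]
  have hsum : M ≤ ∑ k ∈ U, extendPrices F p M k := by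
    simpa [extendPrices, hiF] using single_le_sum hnonneg hiU
  have := hv (subset_univ U)
  unfold utility; linarith

lemma isDemanded_extendPrices (hv : Monotone v) {F S : Finset ι} {p : ι → ℝ} {M : ℝ}
    (hp : ∀ i ∈ F, 0 ≤ p i) (hM0 : 0 ≤ M) (hM : v univ - M ≤ utility v p S) (hSF : S ⊆ F)
    (hS : ∀ U ⊆ F, utility v p U ≤ utility v p S) :
    IsDemanded v (extendPrices F p M) S := by
  intro U
  rw [utility_extendPrices_of_subset p M hSF]
  by_cases hU : U ⊆ F
  · rw [utility_extendPrices_of_subset p M hU]; exact hS U hU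
  · exact (utility_extendPrices_le_of_not_subset hv hp hM0 hU).trans hM

-- Prohibitive prices outside `F` reduce the gross-substitutes property to sets inside `F`.
lemma exists_erase_subset_utility_add_le (hv : Monotone v) (hgs : GrossSubstitutes v)
    {F S R : Finset ι} {p : ι → ℝ} (hp : ∀ i ∈ F, 0 ≤ p i) (hSF : S ⊆ F)
    (hS : ∀ U ⊆ F, utility v p U ≤ utility v p S) (hRF : R ⊆ F) {k : ι} (hkR : k ∉ R) {e : ℝ}
    (he : 0 ≤ e) :
    ∃ T ⊆ F, S.erase k ⊆ T ∧ utility v p R + (if k ∈ T then e else 0) ≤ utility v p T := by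
  set M := v univ - utility v p R + 1
  have hM : 0 ≤ M := by
    have : 0 ≤ ∑ i ∈ R, p i := sum_nonneg fun i hi => hp i (hRF hi)
    linarith [hv (subset_univ R), show utility v p R = v R - ∑ i ∈ R, p i from rfl]
  have hdem : IsDemanded v (extendPrices F p M) S :=
    isDemanded_extendPrices hv hp hM (by linarith [hS R hRF]) hSF hS
  obtain ⟨T, hT, hST⟩ := exists_isDemanded_erase_subset hgs hdem k he
  have hRT := hT R
  rw [utility_update_add, utility_update_add, if_neg hkR, sub_zero,
    utility_extendPrices_of_subset _ _ hRF] at hRT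
  by_cases hTF : T ⊆ F
  · rw [utility_extendPrices_of_subset _ _ hTF] at hRT
    exact ⟨T, hTF, hST, by linarith⟩
  · have := utility_extendPrices_le_of_not_subset hv hp hM hTF
    split_ifs at hRT <;> linarith

lemma marginal_insert_le_of_notMem (hv : Monotone v) (hgs : GrossSubstitutes v) {S : Finset ι}
    {i k : ι} (hiS : i ∉ S) (hkS : k ∉ S) (hik : i ≠ k) :
    v (insert i (insert k S)) - v (insert k S) ≤ v (insert i S) - v S := by
  by_contra! hlt
  obtain ⟨q, hiq, hqk⟩ := exists_between hlt
  obtain ⟨t, ht⟩ : ∃ t, t = v (insert i (insert k S)) - v S - q := ⟨_, rfl⟩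
  set p : ι → ℝ := Pi.single i q + Pi.single k t
  have hp : ∀ y ∈ insert i (insert k S), 0 ≤ p y := by
    intro y _
    have : v S ≤ v (insert k S) := hv (subset_insert k S)
    have : v S ≤ v (insert i S) := hv (subset_insert i S)
    simp only [p, Pi.add_apply, Pi.single_apply]
    split_ifs <;> linarith
  have hS : utility v p S = v S := by
    simp [p, utility, sum_add_distrib, sum_pi_single', hiS, hkS]
  have hF : utility v p (insert i (insert k S)) = v S := by
    simp [p, utility, sum_add_distrib, sum_pi_single', ht]
  have hbound : ∀ U ⊆ insert i (insert k S), utility v p U ≤ v S :=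
    fun U => utility_single_add_single_le hv hiS hkS hik (by linarith) (by linarith) (by linarith)
  obtain ⟨T, hTF, hiST, hT⟩ := exists_erase_subset_utility_add_le hv hgs hp Subset.rfl
    (fun U hU => hF ▸ hbound U hU) ((subset_insert k S).trans (subset_insert i _)) hkS zero_le_one
  rw [hS] at hT
  rw [erase_insert_of_ne hik, erase_insert hkS] at hiST
  by_cases hkT : k ∈ T
  · rw [if_pos hkT] at hT
    linarith [hbound T hTF]
  · have hTi : T = insert i S := Subset.antisymm (fun y hy => by have := hTF hy; aesop) hiST
    have hSi : utility v p (insert i S) = v (insert i S) - q := by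
      simp [p, utility, sum_add_distrib, sum_pi_single', hkS, hik.symm]
    rw [if_neg hkT, hTi, hSi] at hT
    linarith

lemma marginal_insert_le (hv : Monotone v) (hgs : GrossSubstitutes v) (S : Finset ι) (i k : ι) :
    v (insert i (insert k S)) - v (insert k S) ≤ v (insert i S) - v S := by
  by_cases hi : i ∈ insert k S
  · rw [insert_eq_of_mem hi, sub_self, sub_nonneg]
    exact hv (subset_insert i S)
  by_cases hk : k ∈ S
  · rw [insert_eq_of_mem hk]
  obtain ⟨hik, hiS⟩ : i ≠ k ∧ i ∉ S := by simpa using hi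
  exact marginal_insert_le_of_notMem hv hgs hiS hk hik

lemma apply_union_le_of_forall_insert_le (hv : Monotone v) (hgs : GrossSubstitutes v)
    {S C : Finset ι} (h : ∀ i ∈ C, v (insert i S) ≤ v S) : v (S ∪ C) ≤ v S := by
  induction C using Finset.induction_on generalizing S with
  | empty => simp
  | insert k C _ ih =>
    have hk : v (insert k S) ≤ v S := h k (mem_insert_self k C)
    have hC : ∀ i ∈ C, v (insert i (insert k S)) ≤ v (insert k S) := fun i hi => by
      linarith [marginal_insert_le hv hgs S i k, h i (mem_insert_of_mem hi)]
    rw [union_insert, ← insert_union]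
    exact (ih hC).trans hk

lemma apply_le_of_subset_insert_union (hv : Monotone v) (hgs : GrossSubstitutes v)
    {A C U : Finset ι} {j : ι} {x : ℝ} (hC0 : ∀ i ∈ C, v (insert i (insert j A)) ≤ v (insert j A))
    (hC : v (insert j A) - x ≤ v (A ∪ C)) (hmin : ∀ C' ⊂ C, v (A ∪ C') ≤ v (insert j A) - x)
    (hU : U ⊆ insert j (A ∪ C)) :
    v U ≤ (if C ⊆ U then v (A ∪ C) else v (insert j A) - x) + if j ∈ U then x else 0 := by
  by_cases hjU : j ∈ U
  · have : v U ≤ v (insert j A) :=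
      (hv (insert_union j A C ▸ hU)).trans (apply_union_le_of_forall_insert_le hv hgs hC0)
    split_ifs <;> linarith
  have hUA : U ⊆ A ∪ (U ∩ C) := fun y hy => by have := hU hy; aesop
  rw [if_neg hjU, add_zero]
  split_ifs with hCU
  · exact hv (inter_eq_right.mpr hCU ▸ hUA)
  · exact (hv hUA).trans (hmin _ (ssubset_of_subset_of_ne inter_subset_right
      fun h => hCU (h ▸ inter_subset_left)))

lemma utility_le_of_subset_insert_union (hv : Monotone v) (hgs : GrossSubstitutes v)
    {A C U : Finset ι} {j : ι} {x c δ : ℝ} {p : ι → ℝ}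
    (hC0 : ∀ i ∈ C, v (insert i (insert j A)) ≤ v (insert j A))
    (hC : v (insert j A) - x ≤ v (A ∪ C)) (hmin : ∀ C' ⊂ C, v (A ∪ C') ≤ v (insert j A) - x)
    (hδ : 0 ≤ δ) (hcm : c * #C = v (A ∪ C) - (v (insert j A) - x))
    (hp : ∑ y ∈ U, p y = (if j ∈ U then x + δ else 0) + c * #(U ∩ C))
    (hU : U ⊆ insert j (A ∪ C)) :
    utility v p U ≤ v (insert j A) - x - if C ⊆ U then 0 else c * #(U ∩ C) := by
  have := apply_le_of_subset_insert_union hv hgs hC0 hC hmin hU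
  rw [utility, hp]
  by_cases hCU : C ⊆ U
  · rw [if_pos hCU] at this ⊢
    rw [inter_eq_right.mpr hCU]
    split_ifs at this ⊢ <;> linarith
  · rw [if_neg hCU] at this ⊢
    split_ifs at this ⊢ <;> linarith

lemma card_le_one_of_minimal (hv : Monotone v) (hgs : GrossSubstitutes v) {A C : Finset ι}
    {j : ι} {x : ℝ} (hx : 0 ≤ x) (hAC : Disjoint A C) (hjA : j ∉ A) (hjC : j ∉ C)
    (hC0 : ∀ i ∈ C, v (insert i (insert j A)) ≤ v (insert j A))
    (hC : v (insert j A) - x < v (A ∪ C)) (hmin : ∀ C' ⊂ C, v (A ∪ C') ≤ v (insert j A) - x) :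
    #C ≤ 1 := by
  by_contra! hC1
  obtain ⟨a, ha⟩ : ∃ a, a = v (insert j A) - x := ⟨_, rfl⟩
  have hm : (0 : ℝ) < #C := by exact_mod_cast zero_lt_one.trans hC1
  obtain ⟨c, hc, hcm⟩ : ∃ c, 0 < c ∧ c * #C = v (A ∪ C) - a :=
    ⟨(v (A ∪ C) - a) / #C, div_pos (by linarith) hm, div_mul_cancel₀ _ hm.ne'⟩
  set F := insert j (A ∪ C)
  set p : ι → ℝ := fun y => (if y = j then x + c / 2 else 0) + (if y ∈ C then c else 0)
  have hsum (U : Finset ι) : ∑ y ∈ U, p y = (if j ∈ U then x + c / 2 else 0) + c * #(U ∩ C) := by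
    simp only [p, sum_add_distrib, sum_ite_eq', sum_ite_mem, sum_const, nsmul_eq_mul, mul_comm]
  have hp : ∀ y ∈ F, 0 ≤ p y := by
    intro y _; simp only [p]; split_ifs <;> linarith
  have hbound (U : Finset ι) (hU : U ⊆ F) :
      utility v p U ≤ a - if C ⊆ U then 0 else c * #(U ∩ C) :=
    ha ▸ utility_le_of_subset_insert_union hv hgs hC0 hC.le hmin (by positivity) (ha ▸ hcm)
      (hsum U) hU
  have hle_a (U : Finset ι) (hU : U ⊆ F) : utility v p U ≤ a :=
    (hbound U hU).trans (sub_le_self _ (by split_ifs <;> positivity))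
  have hAC_util : utility v p (A ∪ C) = a := by
    simp only [utility, hsum, mem_union, hjA, hjC, or_self, if_false, union_inter_cancel_right]
    linarith
  have hjA_util : utility v p (insert j A) = a - c / 2 := by
    simp only [utility, hsum, mem_insert_self, if_true, insert_inter_of_notMem hjC,
      disjoint_iff_inter_eq_empty.mp hAC, card_empty, Nat.cast_zero, mul_zero]
    linarith
  obtain ⟨i₀, hi₀⟩ : C.Nonempty := card_pos.mp (by omega)
  have hi₀jA : i₀ ∉ insert j A := by
    simpa [ne_of_mem_of_not_mem hi₀ hjC] using disjoint_right.mp hAC hi₀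
  obtain ⟨T, hTF, hCT, hT⟩ := exists_erase_subset_utility_add_le hv hgs hp (subset_insert j _)
    (fun U hU => hAC_util ▸ hle_a U hU) (insert_subset_insert j subset_union_left) hi₀jA hc.le
  rw [hjA_util] at hT
  by_cases hi₀T : i₀ ∈ T
  · rw [if_pos hi₀T] at hT
    linarith [hle_a T hTF]
  obtain ⟨i₁, hi₁C, hi₁⟩ := exists_mem_ne hC1 i₀
  have hi₁T : i₁ ∈ T := hCT (mem_erase.mpr ⟨hi₁, mem_union_right A hi₁C⟩)
  have hTC : (1 : ℝ) ≤ #(T ∩ C) := by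
    exact_mod_cast card_pos.mpr ⟨i₁, mem_inter.mpr ⟨hi₁T, hi₁C⟩⟩
  have hTbound := hbound T hTF
  rw [if_neg fun h => hi₀T (h hi₀)] at hTbound
  rw [if_neg hi₀T] at hT
  nlinarith

end GrossSubstitutes

/-- Technical lemma for gross-substitutes valuations: for disjoint
`A, B`, `j ∉ A ∪ B` and `x ≥ 0`, if every `i ∈ B` has zero marginal value with
respect to `A ∪ {j}` and `0 ≤ v(j|A) - x < v(B|A)`, then some `i ∈ B` has
`v(j|A) - x < v(i|A)`. -/
theorem stmt10 {n : ℕ} (v : Finset (Fin n) → ℝ)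
    (hmono : ∀ S T : Finset (Fin n), S ⊆ T → v S ≤ v T)
    (hgs : ∀ p p' : Fin n → ℝ, (∀ k, p k ≤ p' k) →
      ∀ S : Finset (Fin n),
        (∀ T : Finset (Fin n), v T - ∑ i ∈ T, p i ≤ v S - ∑ i ∈ S, p i) →
        ∃ T : Finset (Fin n),
          (∀ U : Finset (Fin n), v U - ∑ i ∈ U, p' i ≤ v T - ∑ i ∈ T, p' i) ∧
          ∀ k ∈ S, p k = p' k → k ∈ T)
    (A B : Finset (Fin n)) (hAB : Disjoint A B)
    (j : Fin n) (hj : j ∉ A ∪ B) (x : ℝ) (hx : 0 ≤ x)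
    (hB0 : ∀ i ∈ B, v (insert i (insert j A)) - v (insert j A) = 0)
    (h1 : 0 ≤ v (insert j A) - v A - x)
    (h2 : v (insert j A) - v A - x < v (A ∪ B) - v A) :
    ∃ i ∈ B, v (insert j A) - v A - x < v (insert i A) - v A := by
  obtain ⟨C, hCB, hCmin⟩ : ∃ C ≤ B, Minimal (fun C => v (insert j A) - x < v (A ∪ C)) C :=
    exists_minimal_le_of_wellFoundedLT _ B (by linarith)
  have hC1 : #C ≤ 1 := card_le_one_of_minimal hmono hgs hx (hAB.mono_right hCB)
    (fun h => hj (mem_union_left B h)) (fun h => hj (mem_union_right A (hCB h)))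
    (fun i hi => (sub_eq_zero.mp (hB0 i (hCB hi))).le) hCmin.prop
    (fun C' hC' => le_of_not_gt (hCmin.not_prop_of_lt hC'))
  have hC0 : C.Nonempty := by
    rw [nonempty_iff_ne_empty]
    rintro rfl
    linarith [union_empty A ▸ hCmin.prop]
  obtain ⟨i, rfl⟩ := card_eq_one.mp (le_antisymm hC1 (card_pos.mpr hC0))
  have hi := hCmin.prop
  rw [union_comm, ← insert_eq] at hi
  exact ⟨i, hCB (mem_singleton_self i), by linarith⟩
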